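/- Let G = (V, E) be a cubic graph (every vertex has degree exactly 3) with V = {v_1,…,v_n} and E = {e_1,…,e_m}, and for each vertex v_i let E_i be the set of three edges incident to v_i. Construct the CAPR instance I as follows: applicants a_1,…,a_n, one per vertex, each of capacity 4; courses V ∪ E, each of capacity 1; the preference list of a_i consists of v_i followed by the three courses of E_i in some fixed order; the prerequisites, identical for all applicants, are v_i → e for every vertex v_i and every edge e ∈ E_i. Then, for every positive integer K, the graph G has an independent set of size at least K if and only if I admits a matching of cardinality at least m + K. -/
import Mathlib


open Finset

/-- The bundle of courses assigned to applicant `a` by the assignment `M`. -/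
def bundle {A C : Type*} [DecidableEq A] [DecidableEq C]
    (M : Finset (A × C)) (a : A) : Finset C :=
  (M.filter fun p => p.1 = a).image Prod.snd

/-- The number of applicants assigned to course `c` by the assignment `M`. -/
def slots {A C : Type*} [DecidableEq C] (M : Finset (A × C)) (c : C) : ℕ :=
  (M.filter fun p => p.2 = c).card

/-- `M` is a matching of the CAPR instance given by acceptable sets `acc`,
capacities `qA`, `qC` and prerequisite orders `prereq`. -/
def IsMatchingAcc {A C : Type*} [DecidableEq A] [DecidableEq C]
    (acc : A → Finset C) (qA : A → ℕ) (qC : C → ℕ)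
    (prereq : A → C → C → Prop) (M : Finset (A × C)) : Prop :=
  (∀ a, bundle M a ⊆ acc a) ∧ (∀ a, (bundle M a).card ≤ qA a) ∧
    (∀ a, ∀ c ∈ bundle M a, ∀ c', prereq a c c' → c' ∈ bundle M a) ∧
    ∀ c, slots M c ≤ qC c

/-- Vertex `v` is incident to the edge `e_j` (whose endpoints are given by `ep`). -/
def Incid {n m : ℕ} (ep : Fin m → Fin n × Fin n) (v : Fin n) (j : Fin m) : Prop :=
  v = (ep j).1 ∨ v = (ep j).2

instance {n m : ℕ} (ep : Fin m → Fin n × Fin n) (v : Fin n) (j : Fin m) :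
    Decidable (Incid ep v j) := by unfold Incid; infer_instance

lemma mem_bundle {A C : Type*} [DecidableEq A] [DecidableEq C]
    (M : Finset (A × C)) (a : A) (c : C) : c ∈ bundle M a ↔ (a, c) ∈ M := by
  simp only [bundle, Finset.mem_image, Finset.mem_filter]
  constructor
  · rintro ⟨⟨x, y⟩, ⟨hm, rfl⟩, rfl⟩; exact hm
  · intro h; exact ⟨(a, c), ⟨h, rfl⟩, rfl⟩

lemma slots_le_one {A C : Type*} [DecidableEq C] (M : Finset (A × C)) (c : C)
    (x : A × C) (h : ∀ p ∈ M, p.2 = c → p = x) : slots M c ≤ 1 := by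
  have hsub : M.filter (fun p => p.2 = c) ⊆ {x} := by
    intro p hp
    simp only [Finset.mem_filter] at hp
    simp [h p hp.1 hp.2]
  calc slots M c ≤ ({x} : Finset (A × C)).card := Finset.card_le_card hsub
    _ = 1 := Finset.card_singleton x

lemma card_eq_sum_slots {A C : Type*} [DecidableEq C] [Fintype C]
    (M : Finset (A × C)) : M.card = ∑ c : C, slots M c :=
  Finset.card_eq_sum_card_fiberwise (fun x _ => Finset.mem_univ x.2)

/-- let `G` be a cubic graph with vertices `Fin n` and edges
`e_1, …, e_m` given by their endpoints `ep` (loopless, pairwise distinct as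
unordered pairs, every vertex incident to exactly 3 edges).  The CAPR instance `I`
has one applicant per vertex, each of capacity 4; one course per vertex and per
edge, each of capacity 1; applicant `a_i` finds acceptable the course `v_i` and
the three courses of `E_i`; the prerequisites (identical for all applicants) are
`v → e` for every vertex `v` and incident edge `e`.  Then for every positive
integer `K`, `G` has an independent set of size at least `K` iff `I` admits a
matching of cardinality at least `m + K`. -/
theorem cubic_indep_set_iff_large_matching {n m : ℕ}
    (ep : Fin m → Fin n × Fin n)
    (hloop : ∀ j, (ep j).1 ≠ (ep j).2)
    (hdist : Function.Injective fun j => s((ep j).1, (ep j).2))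
    (hcubic : ∀ v : Fin n, (Finset.univ.filter fun j => Incid ep v j).card = 3)
    (K : ℕ) (hK : 0 < K) :
    (∃ S : Finset (Fin n),
        (∀ j : Fin m, ¬ ((ep j).1 ∈ S ∧ (ep j).2 ∈ S)) ∧ K ≤ S.card) ↔
      ∃ M : Finset (Fin n × ((Fin n) ⊕ (Fin m))),
        IsMatchingAcc
          (fun i => insert (Sum.inl i)
            ((Finset.univ.filter fun j => Incid ep i j).image Sum.inr))
          (fun _ => 4) (fun _ => 1)
          (fun _ c c' => ∃ (v : Fin n) (j : Fin m),
            c = Sum.inl v ∧ c' = Sum.inr j ∧ Incid ep v j)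
          M ∧
        m + K ≤ M.card := by
  classical
  constructor
  · rintro ⟨S, hind, hS⟩
    set owner : Fin m → Fin n := fun j => if (ep j).1 ∈ S then (ep j).1 else (ep j).2
      with howner
    have howner_incid : ∀ j, Incid ep (owner j) j := by
      intro j; unfold Incid
      by_cases h : (ep j).1 ∈ S <;> simp [owner, h]
    have howner_mem : ∀ j v, v ∈ S → Incid ep v j → owner j = v := by
      intro j v hv hi
      rcases hi with h | h
      · simp [owner, ← h, hv]
      · have h1 : (ep j).1 ∉ S := fun h1 => hind j ⟨h1, h ▸ hv⟩
        simp [owner, h1, ← h]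
    set M : Finset (Fin n × ((Fin n) ⊕ (Fin m))) :=
      (S.image fun v => (v, Sum.inl v)) ∪
        (Finset.univ.image fun j => (owner j, Sum.inr j)) with hM
    have hmem : ∀ a (c : (Fin n) ⊕ (Fin m)), (a, c) ∈ M ↔
        (a ∈ S ∧ c = Sum.inl a) ∨ ∃ j, owner j = a ∧ c = Sum.inr j := by
      intro a c
      simp only [hM, Finset.mem_union, Finset.mem_image, Finset.mem_univ, true_and,
        Prod.mk.injEq]
      constructor
      · rintro (⟨v, hv, rfl, rfl⟩ | ⟨j, hj1, rfl⟩)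
        · exact Or.inl ⟨hv, rfl⟩
        · exact Or.inr ⟨j, hj1, rfl⟩
      · rintro (⟨ha, rfl⟩ | ⟨j, hj1, rfl⟩)
        · exact Or.inl ⟨a, ha, rfl, rfl⟩
        · exact Or.inr ⟨j, hj1, rfl⟩
    have hacc : ∀ a, bundle M a ⊆ insert (Sum.inl a)
        ((Finset.univ.filter fun j => Incid ep a j).image Sum.inr) := by
      intro a c hc
      rw [mem_bundle, hmem] at hc
      rcases hc with ⟨_, rfl⟩ | ⟨j, hj, rfl⟩
      · exact Finset.mem_insert_self _ _
      · refine Finset.mem_insert_of_mem (Finset.mem_image_of_mem _ ?_)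
        simp only [Finset.mem_filter, Finset.mem_univ, true_and]
        exact hj ▸ howner_incid j
    refine ⟨M, ⟨hacc, ?_, ?_, ?_⟩, ?_⟩
    · intro a
      calc (bundle M a).card ≤ _ := Finset.card_le_card (hacc a)
        _ ≤ ((Finset.univ.filter fun j => Incid ep a j).image Sum.inr).card + 1 :=
          Finset.card_insert_le _ _
        _ ≤ (Finset.univ.filter fun j => Incid ep a j).card + 1 := by
          exact Nat.add_le_add_right (Finset.card_image_le) 1
        _ ≤ 4 := by rw [hcubic a]
    · rintro a c hc c' ⟨v, j, rfl, rfl, hinc⟩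
      rw [mem_bundle, hmem] at hc
      rcases hc with ⟨ha, hv⟩ | ⟨j', _, hj'⟩
      · obtain rfl : v = a := Sum.inl.inj hv
        rw [mem_bundle, hmem]
        exact Or.inr ⟨j, howner_mem j _ ha hinc, rfl⟩
      · exact absurd hj' (by simp)
    · rintro (v | j)
      · refine slots_le_one M _ (v, Sum.inl v) ?_
        rintro ⟨a, c⟩ hp hc
        simp only at hc; subst hc
        rw [hmem] at hp
        rcases hp with ⟨_, hv⟩ | ⟨j, _, hj⟩
        · obtain rfl : v = a := Sum.inl.inj hv
          rfl
        · exact absurd hj (by simp)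
      · refine slots_le_one M _ (owner j, Sum.inr j) ?_
        rintro ⟨a, c⟩ hp hc
        simp only at hc; subst hc
        rw [hmem] at hp
        rcases hp with ⟨_, hv⟩ | ⟨j', hj', hjj⟩
        · exact absurd hv (by simp)
        · obtain rfl : j' = j := by simpa using hjj.symm
          rw [← hj']
    · have hdisj : Disjoint (S.image fun v => (v, Sum.inl v))
          (Finset.univ.image fun j => (owner j, Sum.inr j)) := by
        rw [Finset.disjoint_left]
        rintro ⟨a, c⟩ h1 h2
        simp only [Finset.mem_image, Prod.mk.injEq] at h1 h2
        obtain ⟨v, _, _, rfl⟩ := h1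
        obtain ⟨j, _, _, h⟩ := h2
        exact absurd h (by simp)
      have hc1 : (S.image fun v => (v, (Sum.inl v : (Fin n) ⊕ (Fin m)))).card = S.card := by
        apply Finset.card_image_of_injective
        intro x y h
        exact ((Prod.mk.injEq ..).mp h).1
      have hc2 : ((Finset.univ : Finset (Fin m)).image
          fun j => (owner j, (Sum.inr j : (Fin n) ⊕ (Fin m)))).card = m := by
        rw [Finset.card_image_of_injective _
          (fun x y h => Sum.inr.inj ((Prod.mk.injEq ..).mp h).2)]
        simp
      rw [hM, Finset.card_union_of_disjoint hdisj, hc1, hc2]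
      omega
  · rintro ⟨M, ⟨hacc, hcap, hpre, hslot⟩, hcard⟩
    set S : Finset (Fin n) := Finset.univ.filter fun v => (v, Sum.inl v) ∈ M with hSdef
    have hSedge : ∀ v ∈ S, ∀ j, Incid ep v j → (v, Sum.inr j) ∈ M := by
      intro v hv j hinc
      rw [hSdef, Finset.mem_filter] at hv
      have h1 : Sum.inl v ∈ bundle M v := (mem_bundle ..).mpr hv.2
      have := hpre v _ h1 (Sum.inr j) ⟨v, j, rfl, rfl, hinc⟩
      exact (mem_bundle ..).mp this
    refine ⟨S, ?_, ?_⟩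
    · rintro j ⟨h1, h2⟩
      have e1 : ((ep j).1, Sum.inr j) ∈ M := hSedge _ h1 j (Or.inl rfl)
      have e2 : ((ep j).2, Sum.inr j) ∈ M := hSedge _ h2 j (Or.inr rfl)
      have : 1 < slots M (Sum.inr j) := by
        rw [slots, Finset.one_lt_card]
        refine ⟨((ep j).1, Sum.inr j), Finset.mem_filter.mpr ⟨e1, rfl⟩,
          ((ep j).2, Sum.inr j), Finset.mem_filter.mpr ⟨e2, rfl⟩, ?_⟩
        simp only [ne_eq, Prod.mk.injEq, not_and]
        intro h
        exact absurd h (hloop j)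
      have hle := hslot (Sum.inr j)
      simp only at hle
      omega
    · have hvert : ∀ v : Fin n, slots M (Sum.inl v) ≤ if v ∈ S then 1 else 0 := by
        intro v
        have hkey : ∀ p ∈ M, p.2 = Sum.inl v → p = (v, Sum.inl v) ∧ v ∈ S := by
          rintro ⟨a, c⟩ hp hc
          simp only at hc; subst hc
          have : Sum.inl v ∈ bundle M a := (mem_bundle ..).mpr hp
          have := hacc a this
          simp only [Finset.mem_insert, Finset.mem_image] at this
          rcases this with h | ⟨j, _, h⟩
          · obtain rfl : v = a := Sum.inl.inj h
            exact ⟨rfl, Finset.mem_filter.mpr ⟨Finset.mem_univ _, hp⟩⟩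
          · exact absurd h (by simp)
        by_cases hv : v ∈ S
        · simp only [hv, if_true]
          exact slots_le_one M _ (v, Sum.inl v) (fun p hp hc => (hkey p hp hc).1)
        · simp only [hv, if_false]
          rw [slots]
          simp only [Nat.le_zero, Finset.card_eq_zero, Finset.filter_eq_empty_iff]
          intro p hp hc
          exact hv ((hkey p hp hc).2)
      have hsum : M.card ≤ S.card + m := by
        rw [card_eq_sum_slots M, Fintype.sum_sum_type]
        have h1 : ∑ v : Fin n, slots M (Sum.inl v) ≤ S.card := by
          calc ∑ v : Fin n, slots M (Sum.inl v)
              ≤ ∑ v : Fin n, if v ∈ S then 1 else 0 :=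
                Finset.sum_le_sum (fun v _ => hvert v)
            _ = S.card := by
                rw [Finset.sum_ite_mem, Finset.univ_inter, Finset.sum_const, smul_eq_mul,
                  mul_one]
        have h2 : ∑ j : Fin m, slots M (Sum.inr j) ≤ m := by
          calc ∑ j : Fin m, slots M (Sum.inr j) ≤ ∑ _j : Fin m, 1 :=
              Finset.sum_le_sum (fun j _ => hslot (Sum.inr j))
            _ = m := by simp
        omega
      omega
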